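/- arXiv:2107.09946 — 3 statements merged into one kernel-verified Lean document; each statement's English description precedes it below -/
import Mathlib

section
/- Let A : ℝ → ℝ satisfy A(0)=0, A(-s) - A(s) = s, and A(-s) + A(s) ≥ 0 for all s. Then for any real s and any reals vK, vσ, one has (A(-s)·vK - A(s)·vσ)(vK - vσ) ≥ (s/2)(vK² - vσ²). -/
theorem two_mul_mul_sub_mul_mul_sub {R : Type*} [CommRing R] (a b x y : R) :
    2 * ((a * x - b * y) * (x - y)) = (a - b) * (x ^ 2 - y ^ 2) + (a + b) * (x - y) ^ 2 := by
  ring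

theorem sub_div_two_mul_sq_sub_sq_le {K : Type*} [Field K] [LinearOrder K] [IsStrictOrderedRing K]
    {a b : K} (hab : 0 ≤ a + b) (x y : K) :
    (a - b) / 2 * (x ^ 2 - y ^ 2) ≤ (a * x - b * y) * (x - y) := by
  have hsplit := two_mul_mul_sub_mul_mul_sub a b x y
  have hupwind : 0 ≤ (a + b) * (x - y) ^ 2 := mul_nonneg hab (sq_nonneg _)
  linarith

theorem stmt_8_general (A : ℝ → ℝ)
    (hA1 : ∀ s : ℝ, A (-s) - A s = s) (hA2 : ∀ s : ℝ, 0 ≤ A (-s) + A s) :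
    ∀ s vK vσ : ℝ,
      s / 2 * (vK ^ 2 - vσ ^ 2) ≤ (A (-s) * vK - A s * vσ) * (vK - vσ) := by
  intro s vK vσ
  simpa only [hA1 s] using sub_div_two_mul_sq_sub_sq_le (hA2 s) vK vσ

/-- Coercivity inequality for the advective part: for any admissible flux function A,
    (A(-s)·vK - A(s)·vσ)(vK - vσ) ≥ (s/2)(vK² - vσ²). -/
theorem stmt_8 (A : ℝ → ℝ) (hA0 : A 0 = 0)
    (hA1 : ∀ s : ℝ, A (-s) - A s = s) (hA2 : ∀ s : ℝ, 0 ≤ A (-s) + A s) :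
    ∀ s vK vσ : ℝ,
      s / 2 * (vK ^ 2 - vσ ^ 2) ≤ (A (-s) * vK - A s * vσ) * (vK - vσ) :=
  stmt_8_general A hA1 hA2
end

section
/- Let μ be a probability measure on a measurable space, ψ ∈ L²(μ) with ‖ψ‖_{L²(μ)} = 1, and let ⟨ψ⟩ = ∫ ψ dμ. Then for all real t: ∫ Φ₁((1 + tψ)²) dμ ≤ t² ∫ ψ² log(ψ²) dμ + (1 + t²) log(1 + t²) + (1 + |⟨ψ⟩|) t², where Φ₁(s) = s log s - s + 1 (extended by Φ₁(0) = 1). -/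
/-
For fixed `a`, the function `t ↦ Φ₁((1 + t a)²) - t² a² log a²` vanishes to second order
at `t = 0`, and away from `t = -1/a` its second derivative is
`2 a² (2 + log ((1 + t a)² / a²))`. Gibbs' inequality `y log (x / y) ≤ x - y`, with
`x = (1 + t a)² / (1 + t²)` and `y = a²`, dominates this by the second derivative of
`(1 + t²) log (1 + t²) a² + β(t) a + t²`, where `β'' = 4 t / (1 + t²)`, so `|β(t)| ≤ t²`.
Comparing second derivatives gives the pointwise bound
`Φ₁((1 + t a)²) ≤ t² a² log a² + (1 + t²) log (1 + t²) a² + β(t) a + t²`,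
and integrating it at `a = ψ x` only uses `∫ ψ² dμ = 1` and `∫ ψ dμ = ⟨ψ⟩`.
-/

open MeasureTheory

/-- Φ₁(s) = s log s - s + 1 (Φ₁(0) = 1 since log 0 = 0 in Mathlib). -/
noncomputable def Phi1 (s : ℝ) : ℝ := s * Real.log s - s + 1

open Real Set

theorem nonneg_of_hasDerivAt_of_monotone {f f' : ℝ → ℝ} (hf : ∀ x, HasDerivAt f (f' x) x)
    (hf' : Monotone f') (h₀ : f 0 = 0) (h₀' : f' 0 = 0) (t : ℝ) : 0 ≤ f t := by
  have hcont : Continuous f := continuous_iff_continuousAt.2 fun x => (hf x).continuousAt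
  rcases lt_trichotomy t 0 with ht | rfl | ht
  · obtain ⟨c, hc, hslope⟩ := exists_hasDerivAt_eq_slope f f' ht hcont.continuousOn
      fun x _ => hf x
    have : f' c ≤ 0 := h₀' ▸ hf' hc.2.le
    rw [hslope, h₀, div_nonpos_iff] at this
    rcases this with ⟨_, h⟩ | ⟨h, _⟩ <;> linarith
  · exact h₀.ge
  · obtain ⟨c, hc, hslope⟩ := exists_hasDerivAt_eq_slope f f' ht hcont.continuousOn
      fun x _ => hf x
    have : 0 ≤ f' c := h₀' ▸ hf' hc.1.le
    rw [hslope, h₀, sub_zero, sub_zero] at this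
    exact (div_nonneg_iff.1 this).elim (·.1) fun h => absurd h.2 ht.not_ge

theorem monotone_of_hasDerivAt_nonneg_of_ne {f f' : ℝ → ℝ} {p : ℝ} (hf : Continuous f)
    (hderiv : ∀ x ≠ p, HasDerivAt f (f' x) x) (hnonneg : ∀ x ≠ p, 0 ≤ f' x) :
    Monotone f := by
  refine MonotoneOn.Iic_union_Ici (a := p)
    (monotoneOn_of_hasDerivWithinAt_nonneg (f' := f') (convex_Iic p) hf.continuousOn ?_ ?_)
    (monotoneOn_of_hasDerivWithinAt_nonneg (f' := f') (convex_Ici p) hf.continuousOn ?_ ?_)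
  all_goals simp only [interior_Iic, interior_Ici, mem_Iio, mem_Ioi]
  · exact fun x hx => (hderiv x hx.ne).hasDerivWithinAt
  · exact fun x hx => hnonneg x hx.ne
  · exact fun x hx => (hderiv x hx.ne').hasDerivWithinAt
  · exact fun x hx => hnonneg x hx.ne'

theorem Real.mul_sub_log_le {x y : ℝ} (hx : 0 < x) (hy : 0 ≤ y) :
    y * (log x - log y) ≤ x - y := by
  rcases hy.eq_or_lt with rfl | hy
  · simpa using hx.le
  have := log_le_sub_one_of_pos (div_pos hx hy)
  rw [log_div hx.ne' hy.ne'] at this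
  calc y * (log x - log y) ≤ y * (x / y - 1) := mul_le_mul_of_nonneg_left this hy.le
    _ = x - y := by field_simp

theorem Real.continuous_mul_log_sq : Continuous fun y : ℝ => y * log (y ^ 2) := by
  simpa [Real.log_pow, mul_left_comm] using continuous_mul_log.const_mul 2

theorem hasDerivAt_log_one_add_sq (t : ℝ) :
    HasDerivAt (fun t => log (1 + t ^ 2)) (2 * t / (1 + t ^ 2)) t := by
  refine (((hasDerivAt_pow 2 t).const_add 1).log (by positivity)).congr_deriv ?_
  simp

theorem hasDerivAt_Phi1_sq (y : ℝ) :
    HasDerivAt (fun y => Phi1 (y ^ 2)) (2 * y * log (y ^ 2)) y := by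
  have hcont : Continuous fun y : ℝ => Phi1 (y ^ 2) := by
    convert ((continuous_id.mul continuous_mul_log_sq).sub (continuous_pow 2)).add_const 1
      using 1
    ext y
    simp only [Phi1, Pi.sub_apply, Pi.mul_apply, id]
    ring
  have hcont' : Continuous fun y : ℝ => 2 * y * log (y ^ 2) := by
    simpa only [mul_assoc] using continuous_mul_log_sq.const_mul 2
  refine hasDerivAt_of_hasDerivAt_of_ne' (x := 0) (fun y hy => ?_) hcont.continuousAt
    hcont'.continuousAt y
  have h := (hasDerivAt_pow 2 y).fun_mul ((hasDerivAt_pow 2 y).log (pow_ne_zero 2 hy))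
  refine ((h.fun_sub (hasDerivAt_pow 2 y)).add_const 1).congr_deriv ?_
  field_simp
  ring

theorem hasDerivAt_two_mul_mul_log_sq {y : ℝ} (hy : y ≠ 0) :
    HasDerivAt (fun y => 2 * y * log (y ^ 2)) (2 * log (y ^ 2) + 4) y := by
  have h : HasDerivAt (fun y : ℝ => 2 * y) 2 y := by simpa using (hasDerivAt_id y).const_mul 2
  refine (h.fun_mul ((hasDerivAt_pow 2 y).log (pow_ne_zero 2 hy))).congr_deriv ?_
  field_simp
  ring

-- `β(t) = ∫₀ᵗ 2 log (1 + s²) ds`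
noncomputable def logPrimitive (t : ℝ) : ℝ := 2 * t * log (1 + t ^ 2) - 4 * t + 4 * arctan t

theorem hasDerivAt_logPrimitive (t : ℝ) :
    HasDerivAt logPrimitive (2 * log (1 + t ^ 2)) t := by
  have h₂ : HasDerivAt (fun t : ℝ => 2 * t) 2 t := by simpa using (hasDerivAt_id t).const_mul 2
  have h₄ : HasDerivAt (fun t : ℝ => 4 * t) 4 t := by simpa using (hasDerivAt_id t).const_mul 4
  refine (((h₂.fun_mul (hasDerivAt_log_one_add_sq t)).sub h₄).add
    ((hasDerivAt_arctan t).const_mul 4)).congr_deriv ?_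
  field_simp
  ring

theorem abs_logPrimitive_le (t : ℝ) : |logPrimitive t| ≤ t ^ 2 := by
  have key : ∀ ε : ℝ, ε ^ 2 = 1 → 0 ≤ t ^ 2 + ε * logPrimitive t := by
    intro ε hε
    refine nonneg_of_hasDerivAt_of_monotone (f' := fun t => 2 * t + ε * (2 * log (1 + t ^ 2)))
      (fun t => ((hasDerivAt_pow 2 t).add ((hasDerivAt_logPrimitive t).const_mul ε)).congr_deriv
        (by simp)) ?_ (by simp [logPrimitive]) (by simp) t
    refine monotone_of_hasDerivAt_nonneg
      (fun t => ((hasDerivAt_id t).const_mul 2).add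
        (((hasDerivAt_log_one_add_sq t).const_mul 2).const_mul ε)) fun t => ?_
    calc (0 : ℝ) ≤ 2 * (t + ε) ^ 2 / (1 + t ^ 2) := by positivity
      _ = _ := by field_simp; linear_combination hε
  rw [abs_le]
  constructor <;> [linarith [key 1 (by norm_num)]; linarith [key (-1) (by norm_num)]]

theorem deriv2_Phi1_sq_one_add_mul_le {a t : ℝ} (hta : 1 + t * a ≠ 0) :
    a * (a * (2 * log ((1 + t * a) ^ 2) + 4)) ≤
      2 * (a ^ 2 * log (a ^ 2)) + (2 * log (1 + t ^ 2) + 2 * t * (2 * t / (1 + t ^ 2)) + 2) * a ^ 2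
        + 2 * (2 * t / (1 + t ^ 2)) * a + 2 := by
  have hc : 0 < 1 + t ^ 2 := by positivity
  have gibbs := mul_sub_log_le (div_pos (by positivity) hc : 0 < (1 + t * a) ^ 2 / (1 + t ^ 2))
    (sq_nonneg a)
  rw [log_div (by positivity) hc.ne'] at gibbs
  have slack : 0 ≤ 2 - 2 / (1 + t ^ 2) + 2 * t ^ 2 * a ^ 2 / (1 + t ^ 2) := by
    have : 2 / (1 + t ^ 2) ≤ 2 := div_le_self zero_le_two (by nlinarith)
    have : 0 ≤ 2 * t ^ 2 * a ^ 2 / (1 + t ^ 2) := by positivity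
    linarith
  linear_combination 2 * gibbs + slack

theorem Phi1_sq_one_add_mul_le (a t : ℝ) :
    Phi1 ((1 + t * a) ^ 2) ≤ t ^ 2 * (a ^ 2 * log (a ^ 2))
      + (1 + t ^ 2) * log (1 + t ^ 2) * a ^ 2 + logPrimitive t * a + t ^ 2 := by
  have haff (t : ℝ) : HasDerivAt (fun t => 1 + t * a) a t := by
    simpa using ((hasDerivAt_id t).mul_const a).const_add 1
  have hpow (t : ℝ) : HasDerivAt (fun t : ℝ => t ^ 2) (2 * t) t := by
    simpa using hasDerivAt_pow 2 t
  set D' : ℝ → ℝ := fun t => 2 * t * (a ^ 2 * log (a ^ 2))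
    + (2 * t * log (1 + t ^ 2) + 2 * t) * a ^ 2 + 2 * log (1 + t ^ 2) * a + 2 * t
    - 2 * (1 + t * a) * log ((1 + t * a) ^ 2) * a with hD'def
  have hD (t : ℝ) : HasDerivAt (fun t => t ^ 2 * (a ^ 2 * log (a ^ 2))
      + (1 + t ^ 2) * log (1 + t ^ 2) * a ^ 2 + logPrimitive t * a + t ^ 2
      - Phi1 ((1 + t * a) ^ 2)) (D' t) t := by
    have h := (((((hpow t).mul_const (a ^ 2 * log (a ^ 2))).add
      ((((hpow t).const_add 1).fun_mul (hasDerivAt_log_one_add_sq t)).mul_const (a ^ 2))).add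
      ((hasDerivAt_logPrimitive t).mul_const a)).add (hpow t)).sub
      ((hasDerivAt_Phi1_sq (1 + t * a)).comp t (haff t))
    refine h.congr_deriv ?_
    simp only [hD'def]
    field_simp
  have hD'cont : Continuous D' := by
    have hL : Continuous fun t => log (1 + t ^ 2) :=
      continuous_iff_continuousAt.2 fun t => (hasDerivAt_log_one_add_sq t).continuousAt
    have hg : Continuous fun t => (1 + t * a) * log ((1 + t * a) ^ 2) :=
      continuous_mul_log_sq.comp (by fun_prop)
    simp only [hD'def, mul_assoc 2 (1 + _ * a)]
    fun_prop
  have hne (t : ℝ) (ht : t ≠ -a⁻¹) : 1 + t * a ≠ 0 := by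
    rcases eq_or_ne a 0 with rfl | ha
    · simp
    · exact fun h => ht (by field_simp; linarith)
  have hD' (t : ℝ) (ht : t ≠ -a⁻¹) : HasDerivAt D' (2 * (a ^ 2 * log (a ^ 2))
      + (2 * log (1 + t ^ 2) + 2 * t * (2 * t / (1 + t ^ 2)) + 2) * a ^ 2
      + 2 * (2 * t / (1 + t ^ 2)) * a + 2 - a * (a * (2 * log ((1 + t * a) ^ 2) + 4))) t := by
    have h₂ : HasDerivAt (fun t : ℝ => 2 * t) 2 t := by
      simpa using (hasDerivAt_id t).const_mul 2
    have hL := hasDerivAt_log_one_add_sq t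
    have h := ((((h₂.mul_const (a ^ 2 * log (a ^ 2))).add
      (((h₂.fun_mul hL).add h₂).mul_const (a ^ 2))).add ((hL.const_mul 2).mul_const a)).add h₂).sub
      (((hasDerivAt_two_mul_mul_log_sq (hne t ht)).comp t (haff t)).mul_const a)
    exact h.congr_deriv (by ring)
  exact sub_nonneg.1 <| nonneg_of_hasDerivAt_of_monotone hD
    (monotone_of_hasDerivAt_nonneg_of_ne hD'cont hD'
      fun t ht => sub_nonneg.2 (deriv2_Phi1_sq_one_add_mul_le (hne t ht)))
    (by simp [Phi1, logPrimitive]) (by simp [hD'def]) t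

/-- Lemma A.2: for a probability measure μ and ψ with ‖ψ‖_{L²(μ)} = 1,
    ∫ Φ₁((1+tψ)²) dμ ≤ t²∫ ψ²log(ψ²) dμ + (1+t²)log(1+t²) + (1+|⟨ψ⟩_μ|)t². -/
theorem stmt_15 {α : Type*} [MeasurableSpace α] (μ : Measure α) [IsProbabilityMeasure μ]
    (ψ : α → ℝ) (hψ : MemLp ψ 2 μ)
    (hnorm : ∫ x, (ψ x) ^ 2 ∂μ = 1)
    (hlogint : Integrable (fun x => (ψ x) ^ 2 * Real.log ((ψ x) ^ 2)) μ)
    (hΦint : ∀ t : ℝ, Integrable (fun x => Phi1 ((1 + t * ψ x) ^ 2)) μ) :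
    ∀ t : ℝ,
      ∫ x, Phi1 ((1 + t * ψ x) ^ 2) ∂μ ≤
        t ^ 2 * ∫ x, (ψ x) ^ 2 * Real.log ((ψ x) ^ 2) ∂μ
        + (1 + t ^ 2) * Real.log (1 + t ^ 2)
        + (1 + |∫ x, ψ x ∂μ|) * t ^ 2 := by
  intro t
  have hψ₁ : Integrable ψ μ := hψ.integrable one_le_two
  have h₁ := hlogint.const_mul (t ^ 2)
  have h₂ := hψ.integrable_sq.const_mul ((1 + t ^ 2) * log (1 + t ^ 2))
  have h₃ := hψ₁.const_mul (logPrimitive t)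
  have hlin : logPrimitive t * ∫ x, ψ x ∂μ ≤ t ^ 2 * |∫ x, ψ x ∂μ| := calc
    _ ≤ |logPrimitive t| * |∫ x, ψ x ∂μ| := (le_abs_self _).trans (abs_mul _ _).le
    _ ≤ t ^ 2 * |∫ x, ψ x ∂μ| := by gcongr; exact abs_logPrimitive_le t
  calc ∫ x, Phi1 ((1 + t * ψ x) ^ 2) ∂μ
      ≤ ∫ x, (t ^ 2 * (ψ x ^ 2 * log (ψ x ^ 2)) + (1 + t ^ 2) * log (1 + t ^ 2) * ψ x ^ 2
          + logPrimitive t * ψ x + t ^ 2) ∂μ :=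
        integral_mono (hΦint t) (((h₁.fun_add h₂).fun_add h₃).fun_add (integrable_const _))
          fun x => Phi1_sq_one_add_mul_le (ψ x) t
    _ = t ^ 2 * ∫ x, ψ x ^ 2 * log (ψ x ^ 2) ∂μ + (1 + t ^ 2) * log (1 + t ^ 2)
          + logPrimitive t * ∫ x, ψ x ∂μ + t ^ 2 := by
        rw [integral_add ((h₁.fun_add h₂).fun_add h₃) (integrable_const _),
          integral_add (h₁.fun_add h₂) h₃, integral_add h₁ h₂, integral_const_mul,
          integral_const_mul, integral_const_mul, hnorm,
          integral_const, probReal_univ, one_smul, mul_one]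
    _ ≤ _ := by linarith
end

section
/- Let μ be a probability measure, q > 2, and ξ ∈ L^q(μ). Then with Φ₁(s) = s log s - s + 1: ∫ Φ₁(ξ²) dμ ≤ (q/(q-2)) ‖ξ-1‖²_{L^q(μ)} + ((2q-6)/(q-2)) ‖ξ-1‖²_{L²(μ)} + Φ₁(1 + ‖ξ-1‖²_{L²(μ)}). -/
/-!
Write η = ξ - 1 and φ = 1 + η² ≥ 1. Pointwise Φ₁((1 + η)²) ≤ 3η² + Φ₁(φ): split
Φ₁(a) - Φ₁(b) into the remainder a log(a/b) - (a - b), controlled by second-order bounds on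
log on either side of 1, plus (a - b) log b.

For the entropy term, put p = q/2. The tangent-line bound log y ≤ y - 1 at y = φ^(p-1)/c gives
(p - 1) φ log φ ≤ φ^p/c - φ + φ log c for every c > 0. Minkowski's inequality gives
‖φ‖_p ≤ 1 + ‖η‖_q², and the choice c = (1 + ‖η‖_q²)^(p-1) yields
∫ φ log φ ≤ (1 + t) log (1 + t) + q/(q - 2) (‖η‖_q² - t) with t = ‖η‖₂².
-/

open MeasureTheory

namespace Real

theorem log_le_sub_inv_div_two {x : ℝ} (hx : 1 ≤ x) : log x ≤ (x - x⁻¹) / 2 := by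
  rw [← sinh_log (by linarith)]
  exact self_le_sinh_iff.2 (log_nonneg hx)

theorem log_le_sub_one_sub_sq_div_two {x : ℝ} (hx0 : 0 < x) (hx1 : x ≤ 1) :
    log x ≤ x - 1 - (x - 1) ^ 2 / 2 := by
  have hy : |1 - x| < 1 := by rw [abs_lt]; constructor <;> linarith
  have hsum := sum_le_hasSum (Finset.range 2) (fun n _ => by positivity)
    (hasSum_pow_div_log_of_abs_lt_one hy)
  norm_num [Finset.sum_range_succ] at hsum
  nlinarith

theorem log_one_add_sq_le {u : ℝ} (hu : 0 ≤ u) : log (1 + u ^ 2) ≤ u := by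
  rw [log_le_iff_le_exp (by positivity)]
  have h := sum_le_exp_of_nonneg hu 4
  norm_num [Finset.sum_range_succ, Nat.factorial] at h
  nlinarith [sq_nonneg (u - 3/2)]

theorem mul_log_le_mul_log_add_sub {a b : ℝ} (ha : 0 ≤ a) (hb : 0 < b) :
    a * log b ≤ a * log a + (b - a) := by
  rcases ha.eq_or_lt with rfl | ha
  · simpa using hb.le
  have h := mul_le_mul_of_nonneg_left (log_le_sub_one_of_pos (div_pos hb ha)) ha.le
  rw [log_div hb.ne' ha.ne', mul_sub, mul_sub, mul_div_cancel₀ _ ha.ne'] at h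
  linarith

theorem mul_log_div_sub_sub_le_of_le {a b : ℝ} (hb : 0 < b) (hba : b ≤ a) :
    a * log (a / b) - (a - b) ≤ (a - b) ^ 2 / (2 * b) := by
  have ha : 0 < a := hb.trans_le hba
  have h := mul_le_mul_of_nonneg_left
    (log_le_sub_inv_div_two ((one_le_div hb).2 hba)) ha.le
  rw [inv_div] at h
  have e : a * ((a / b - b / a) / 2) - (a - b) = (a - b) ^ 2 / (2 * b) := by
    field_simp; ring
  linarith

theorem mul_log_div_sub_sub_le_of_ge {a b : ℝ} (ha : 0 < a) (hab : a ≤ b) :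
    a * log (a / b) - (a - b) ≤ (a - b) ^ 2 * (2 * b - a) / (2 * b ^ 2) := by
  have hb : 0 < b := ha.trans_le hab
  have h := mul_le_mul_of_nonneg_left
    (log_le_sub_one_sub_sq_div_two (div_pos ha hb) ((div_le_one hb).2 hab)) ha.le
  have e : a * (a / b - 1 - (a / b - 1) ^ 2 / 2) - (a - b)
      = (a - b) ^ 2 * (2 * b - a) / (2 * b ^ 2) := by
    field_simp; ring
  linarith

theorem sub_one_mul_mul_log_le {x c p : ℝ} (hx : 0 ≤ x) (hc : 0 < c) (hp : 0 < p) :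
    (p - 1) * (x * log x) ≤ x ^ p / c - x + x * log c := by
  rcases hx.eq_or_lt with rfl | hx
  · simp [zero_rpow hp.ne']
  have h := mul_le_mul_of_nonneg_left
    (log_le_sub_one_of_pos (div_pos (rpow_pos_of_pos hx (p - 1)) hc)) hx.le
  rw [log_div (rpow_pos_of_pos hx _).ne' hc.ne', log_rpow hx, mul_sub, mul_sub, mul_one,
    mul_div_assoc', ← rpow_one_add' hx.le (by linarith), add_sub_cancel] at h
  linarith

theorem sq_rpow_div_two (z q : ℝ) : (z ^ 2) ^ (q / 2) = |z| ^ q := by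
  rw [← sq_abs, ← rpow_natCast, ← rpow_mul (abs_nonneg z)]
  ring_nf

end Real

open Real

theorem Phi1_sub_Phi1 {a b : ℝ} (ha : 0 < a) (hb : 0 < b) :
    Phi1 a - Phi1 b = a * log (a / b) - (a - b) + (a - b) * log b := by
  rw [Phi1, Phi1, log_div ha.ne' hb.ne']; ring

theorem Phi1_one_add_sq_le (u : ℝ) : Phi1 ((1 + u) ^ 2) ≤ 3 * u ^ 2 + Phi1 (1 + u ^ 2) := by
  rcases eq_or_ne u (-1) with rfl | hu
  · norm_num [Phi1]
    linarith [log_nonneg one_le_two]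
  have ha : 0 < (1 + u) ^ 2 := by
    have : 1 + u ≠ 0 := fun h => hu (by linarith)
    positivity
  have hb : 0 < 1 + u ^ 2 := by positivity
  have hsplit := Phi1_sub_Phi1 ha hb
  have hab : (1 + u) ^ 2 - (1 + u ^ 2) = 2 * u := by ring
  rw [hab] at hsplit
  rcases le_or_gt 0 u with hu0 | hu0
  · have hD := mul_log_div_sub_sub_le_of_le (a := (1 + u) ^ 2) hb (by nlinarith)
    rw [hab, le_div_iff₀ (by positivity)] at hD
    have h2u : 0 ≤ 2 * u := by linarith
    rcases le_total u 1 with hu1 | hu1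
    · have hlog : log (1 + u ^ 2) ≤ u ^ 2 := by linarith [log_le_sub_one_of_pos hb]
      have hpoly : 0 ≤ u ^ 2 * (1 - u) * (2 * u ^ 2 - u + 1) :=
        mul_nonneg (mul_nonneg (sq_nonneg u) (sub_nonneg.2 hu1)) (by nlinarith)
      nlinarith [mul_le_mul_of_nonneg_left hlog h2u]
    · have hpoly : 0 ≤ u ^ 2 * (u ^ 2 - 1) := mul_nonneg (sq_nonneg u) (by nlinarith)
      nlinarith [mul_le_mul_of_nonneg_left (log_one_add_sq_le hu0) h2u]
  · have hD := mul_log_div_sub_sub_le_of_ge (b := 1 + u ^ 2) ha (by nlinarith)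
    have hpoly : (2 * u) ^ 2 * (2 * (1 + u ^ 2) - (1 + u) ^ 2) / (2 * (1 + u ^ 2) ^ 2)
        ≤ 3 * u ^ 2 := by
      rw [div_le_iff₀ (by positivity)]
      have h : 0 ≤ u ^ 2 * ((1 + 2 * u) ^ 2 + 3 * u ^ 4) := by positivity
      nlinarith
    have hlog : 2 * u * log (1 + u ^ 2) ≤ 0 :=
      mul_nonpos_of_nonpos_of_nonneg (by linarith) (log_nonneg (by nlinarith))
    rw [hab] at hD
    linarith

namespace MeasureTheory

variable {α : Type*} [MeasurableSpace α] {μ : Measure α}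

theorem MemLp.integral_norm_add_rpow_le {E : Type*} [NormedAddCommGroup E] {f g : α → E}
    {p : ℝ} (hp : 1 ≤ p) (hf : MemLp f (ENNReal.ofReal p) μ)
    (hg : MemLp g (ENNReal.ofReal p) μ) :
    (∫ x, ‖f x + g x‖ ^ p ∂μ) ^ p⁻¹
      ≤ (∫ x, ‖f x‖ ^ p ∂μ) ^ p⁻¹ + (∫ x, ‖g x‖ ^ p ∂μ) ^ p⁻¹ := by
  have hp0 : ENNReal.ofReal p ≠ 0 := by simp; linarith
  have h := eLpNorm_add_le hf.1 hg.1 (ENNReal.one_le_ofReal.2 hp)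
  rw [(hf.add hg).eLpNorm_eq_integral_rpow_norm hp0 ENNReal.ofReal_ne_top,
    hf.eLpNorm_eq_integral_rpow_norm hp0 ENNReal.ofReal_ne_top,
    hg.eLpNorm_eq_integral_rpow_norm hp0 ENNReal.ofReal_ne_top,
    ENNReal.toReal_ofReal (by linarith), ← ENNReal.ofReal_add (by positivity) (by positivity),
    ENNReal.ofReal_le_ofReal_iff (by positivity)] at h
  exact h

theorem integral_one_add_rpow_le [IsProbabilityMeasure μ] {g : α → ℝ} {p : ℝ} (hp : 1 ≤ p)
    (hg : MemLp g (ENNReal.ofReal p) μ) (hg0 : ∀ x, 0 ≤ g x) :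
    ∫ x, (1 + g x) ^ p ∂μ ≤ (1 + (∫ x, g x ^ p ∂μ) ^ p⁻¹) ^ p := by
  have h := (memLp_const (1 : ℝ)).integral_norm_add_rpow_le hp hg
  simp only [norm_one, one_rpow, integral_const, probReal_univ, smul_eq_mul, mul_one,
    norm_eq_abs, abs_of_nonneg (hg0 _), abs_of_nonneg (add_nonneg zero_le_one (hg0 _))] at h
  have hlhs : 0 ≤ ∫ x, (1 + g x) ^ p ∂μ :=
    integral_nonneg fun x => rpow_nonneg (by linarith [hg0 x]) _
  have hrhs : 0 ≤ 1 + (∫ x, g x ^ p ∂μ) ^ p⁻¹ :=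
    add_nonneg zero_le_one (rpow_nonneg (integral_nonneg fun x => rpow_nonneg (hg0 x) _) _)
  exact (rpow_inv_le_iff_of_pos hlhs hrhs (by linarith)).1 h

theorem integrable_mul_log_of_one_le {f : α → ℝ} {p : ℝ} (hp : 1 < p)
    (hf1 : ∀ x, 1 ≤ f x) (hfm : AEStronglyMeasurable f μ)
    (hfp : Integrable (fun x => f x ^ p) μ) :
    Integrable (fun x => f x * log (f x)) μ := by
  refine (hfp.div_const (p - 1)).mono' (continuous_mul_log.comp_aestronglyMeasurable hfm) ?_
  refine .of_forall fun x => ?_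
  have hx : 0 ≤ f x * log (f x) := mul_nonneg (by linarith [hf1 x]) (log_nonneg (hf1 x))
  have h := sub_one_mul_mul_log_le (x := f x) (p := p) (by linarith [hf1 x]) one_pos (by linarith)
  rw [norm_of_nonneg hx, le_div_iff₀ (by linarith)]
  simp only [div_one, log_one, mul_zero, add_zero] at h
  linarith [hf1 x]

theorem integral_mul_log_le {f : α → ℝ} {p B : ℝ} (hp : 1 < p) (hB : 0 < B)
    (hf0 : ∀ x, 0 ≤ f x) (hf : Integrable f μ) (hfp : Integrable (fun x => f x ^ p) μ)
    (hflog : Integrable (fun x => f x * log (f x)) μ) (hfB : ∫ x, f x ^ p ∂μ ≤ B ^ p) :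
    ∫ x, f x * log (f x) ∂μ
      ≤ (∫ x, f x ∂μ) * log (∫ x, f x ∂μ) + p / (p - 1) * (B - ∫ x, f x ∂μ) := by
  set a := ∫ x, f x ∂μ
  have hc : 0 < B ^ (p - 1) := rpow_pos_of_pos hB _
  have htangent : (p - 1) * ∫ x, f x * log (f x) ∂μ
      ≤ (∫ x, f x ^ p ∂μ) / B ^ (p - 1) - a + a * log (B ^ (p - 1)) := by
    have hint : Integrable (fun x => f x ^ p / B ^ (p - 1) - f x) μ := (hfp.div_const _).sub hf
    have h : ∫ x, (p - 1) * (f x * log (f x)) ∂μ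
        ≤ ∫ x, (f x ^ p / B ^ (p - 1) - f x + f x * log (B ^ (p - 1))) ∂μ :=
      integral_mono (hflog.const_mul (p - 1)) (hint.add (hf.mul_const _))
        fun x => sub_one_mul_mul_log_le (hf0 x) hc (by linarith)
    rwa [integral_const_mul, integral_add hint (hf.mul_const _),
      integral_sub (hfp.div_const _) hf, integral_div, integral_mul_const] at h
  have hpow : (∫ x, f x ^ p ∂μ) / B ^ (p - 1) ≤ B := by
    rw [div_le_iff₀ hc, ← rpow_one_add' hB.le (by linarith), add_sub_cancel]
    exact hfB
  have hlog : a * log B ≤ a * log a + (B - a) :=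
    mul_log_le_mul_log_add_sub (integral_nonneg hf0) hB
  rw [log_rpow hB] at htangent
  refine le_of_mul_le_mul_left ?_ (sub_pos.2 hp)
  have e : (p - 1) * (p / (p - 1) * (B - a)) = p * (B - a) := by
    field_simp [(sub_pos.2 hp).ne']
  rw [mul_add, e]
  nlinarith [mul_le_mul_of_nonneg_left hlog (sub_pos.2 hp).le]

theorem MemLp.sq {f : α → ℝ} {q : ℝ} (hf : MemLp f (ENNReal.ofReal q) μ) :
    MemLp (fun x => f x ^ 2) (ENNReal.ofReal (q / 2)) μ := by
  have h := hf.norm_rpow_div 2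
  rw [← ENNReal.ofReal_ofNat 2, ← ENNReal.ofReal_div_of_pos two_pos] at h
  convert h using 2 with x
  simp

theorem MemLp.integrable_rpow_of_nonneg [IsFiniteMeasure μ] {f : α → ℝ} {p : ℝ}
    (hf : MemLp f (ENNReal.ofReal p) μ) (hp : 0 ≤ p) (hf0 : ∀ x, 0 ≤ f x) :
    Integrable (fun x => f x ^ p) μ := by
  simpa [ENNReal.toReal_ofReal hp, abs_of_nonneg (hf0 _)] using hf.integrable_norm_rpow'

theorem integral_one_add_sq_mul_log_le [IsProbabilityMeasure μ] {η : α → ℝ} {q : ℝ}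
    (hq : 2 < q) (hη : MemLp η (ENNReal.ofReal q) μ) :
    Integrable (fun x => (1 + η x ^ 2) * log (1 + η x ^ 2)) μ ∧
      ∫ x, (1 + η x ^ 2) * log (1 + η x ^ 2) ∂μ
        ≤ (1 + ∫ x, η x ^ 2 ∂μ) * log (1 + ∫ x, η x ^ 2 ∂μ)
          + q / (q - 2) * ((∫ x, |η x| ^ q ∂μ) ^ (2 / q) - ∫ x, η x ^ 2 ∂μ) := by
  have hp : 1 < q / 2 := by linarith
  have hφ1 : ∀ x, 1 ≤ 1 + η x ^ 2 := fun x => le_add_of_nonneg_right (sq_nonneg _)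
  have hφ0 : ∀ x, 0 ≤ 1 + η x ^ 2 := fun x => zero_le_one.trans (hφ1 x)
  have hφ : MemLp (fun x => 1 + η x ^ 2) (ENNReal.ofReal (q / 2)) μ :=
    (memLp_const (1 : ℝ)).add hη.sq
  have hφp := hφ.integrable_rpow_of_nonneg (by linarith) hφ0
  have hlog := integrable_mul_log_of_one_le hp hφ1 hφ.1 hφp
  have hmoment : ∫ x, (1 + η x ^ 2) ^ (q / 2) ∂μ
      ≤ (1 + (∫ x, |η x| ^ q ∂μ) ^ (2 / q)) ^ (q / 2) := by
    simpa only [sq_rpow_div_two, inv_div] using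
      integral_one_add_rpow_le hp.le hη.sq fun x => sq_nonneg _
  have hint : ∫ x, (1 + η x ^ 2) ∂μ = 1 + ∫ x, η x ^ 2 ∂μ := by
    rw [integral_add (integrable_const 1) (hη.sq.integrable (by simpa using hp.le)),
      integral_const, probReal_univ, one_smul]
  have h := integral_mul_log_le hp (by positivity) hφ0 (hφ.integrable (by simpa using hp.le)) hφp
    hlog hmoment
  have hcoef : q / 2 / (q / 2 - 1) = q / (q - 2) := by field_simp [show q - 2 ≠ 0 by linarith]
  rw [hint, hcoef, add_sub_add_left_eq_sub] at h
  exact ⟨hlog, h⟩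

end MeasureTheory

/-- Proposition A.3 (ii): for μ a probability measure, q > 2 and ξ ∈ L^q(μ),
    ∫ Φ₁(ξ²) dμ ≤ (q/(q-2))‖ξ-1‖²_{L^q} + ((2q-6)/(q-2))‖ξ-1‖²_{L²}
                    + Φ₁(1 + ‖ξ-1‖²_{L²}). -/
theorem stmt_17 {α : Type*} [MeasurableSpace α] (μ : Measure α) [IsProbabilityMeasure μ]
    (q : ℝ) (hq : 2 < q) (ξ : α → ℝ)
    (hLq : MemLp ξ (ENNReal.ofReal q) μ)
    (hΦint : Integrable (fun x => Phi1 ((ξ x) ^ 2)) μ) :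
    ∫ x, Phi1 ((ξ x) ^ 2) ∂μ ≤
      q / (q - 2) * (∫ x, |ξ x - 1| ^ q ∂μ) ^ (2 / q)
      + (2 * q - 6) / (q - 2) * ∫ x, (ξ x - 1) ^ 2 ∂μ
      + Phi1 (1 + ∫ x, (ξ x - 1) ^ 2 ∂μ) := by
  have hη : MemLp (fun x => ξ x - 1) (ENNReal.ofReal q) μ := hLq.sub (memLp_const (1 : ℝ))
  have hsq : Integrable (fun x => (ξ x - 1) ^ 2) μ :=
    hη.sq.integrable (ENNReal.one_le_ofReal.2 (by linarith))
  obtain ⟨hlog, hentropy⟩ := integral_one_add_sq_mul_log_le hq hη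
  have hpointwise : ∫ x, Phi1 ((ξ x) ^ 2) ∂μ
      ≤ ∫ x, (2 * (ξ x - 1) ^ 2 + (1 + (ξ x - 1) ^ 2) * log (1 + (ξ x - 1) ^ 2)) ∂μ := by
    refine integral_mono hΦint ((hsq.const_mul 2).add hlog) fun x => ?_
    have h := Phi1_one_add_sq_le (ξ x - 1)
    simp only [Phi1, add_sub_cancel] at h ⊢
    linarith
  rw [integral_add (hsq.const_mul 2) hlog, integral_const_mul] at hpointwise
  have hcoef : (2 * q - 6) / (q - 2) = 3 - q / (q - 2) := by
    field_simp [show q - 2 ≠ 0 by linarith]; ring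
  rw [hcoef, Phi1]
  linarith
end
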